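/- (Signal Alignment for Unqualified Path within Qualified Component) Let G be a non-degenerate CDS instance and consider a CDS scheme for G over F_p with parameters (L, L_Z, N) where N = L (rate 1/2). Then for every unqualified path (v_1, v_2, …, v_P) all of whose vertices lie in the same qualified component of G, the joint entropy of the two end signals satisfies H(v_1, v_P) ≤ L in p-ary units. -/

import Mathlib

open scoped BigOperators

/-- Probability that the random variable `X`, defined on a finite sample space `Ω`
equipped with the uniform distribution, takes the value `a`. -/
noncomputable def prb {Ω α : Type*} [Fintype Ω] (X : Ω → α) (a : α) : ℝ :=
  (Nat.card {ω : Ω // X ω = a} : ℝ) / (Fintype.card Ω : ℝ)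

/-- Shannon entropy, in `p`-ary units (logarithm base `p`), of the random variable `X`
defined on a finite sample space `Ω` equipped with the uniform distribution. -/
noncomputable def entp (p : ℕ) {Ω α : Type*} [Fintype Ω] [Fintype α] (X : Ω → α) : ℝ :=
  ∑ a : α, -(prb X a * Real.logb p (prb X a))

/-- Correctness of a CDS scheme `φ`: for every qualified edge `{v,u}`, the secret is
determined by the pair of signals. -/
def CDSCorrect {V : Type*} (Q : SimpleGraph V) {p L LZ N : ℕ}
    (φ : V → (Fin L → ZMod p) → (Fin LZ → ZMod p) → (Fin N → ZMod p)) : Prop :=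
  ∀ v u : V, Q.Adj v u →
    ∃ g : (Fin N → ZMod p) → (Fin N → ZMod p) → (Fin L → ZMod p),
      ∀ s z, g (φ v s z) (φ u s z) = s

/-- Security of a CDS scheme `φ`: for every unqualified edge `{v,u}`, the pair of signals
is statistically independent of the (uniform) secret. -/
def CDSSecure {V : Type*} (U : SimpleGraph V) {p L LZ N : ℕ}
    (φ : V → (Fin L → ZMod p) → (Fin LZ → ZMod p) → (Fin N → ZMod p)) : Prop :=
  ∀ v u : V, U.Adj v u → ∀ (s₁ s₂ : Fin L → ZMod p) (a b : Fin N → ZMod p),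
    Nat.card {z : Fin LZ → ZMod p // φ v s₁ z = a ∧ φ u s₁ z = b} =
    Nat.card {z : Fin LZ → ZMod p // φ v s₂ z = a ∧ φ u s₂ z = b}

/-! Along a qualified edge `{v, w}` the secret is decoded from the pair of signals, and since
`v` also lies on an unqualified edge, security makes every value of `v` possible under every
secret. With `N = L` the decoder, for a fixed value of `v`, is then a surjective and hence
injective self-map of `F_p^L`, so given the secret the signal of `v` determines that of `w`,
and by induction that of every vertex of its qualified component. Across an unqualified edge
`{v, u}` inside the component, security transports any realisation of `(v, u)` to any other
secret, so the signal of `v` determines that of `u` independently of the secret. Along the path,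
`v₁` therefore determines `v_P`, the pair takes at most `p ^ L` values, and its entropy is at
most `L`. -/

open Finset Real

theorem sum_negMulLog_le_log_card {ι : Type*} {s : Finset ι} (hs : s.Nonempty) {q : ι → ℝ}
    (hq : ∀ i ∈ s, 0 ≤ q i) (hsum : ∑ i ∈ s, q i = 1) :
    ∑ i ∈ s, negMulLog (q i) ≤ log #s := by
  have hcard : (0 : ℝ) < #s := by exact_mod_cast hs.card_pos
  -- Jensen for the concave `negMulLog` with uniform weights on `s`
  have hjensen := concaveOn_negMulLog.le_map_sum (t := s) (w := fun _ => (#s : ℝ)⁻¹) (p := q)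
    (fun _ _ => by positivity) (by simp [hcard.ne']) hq
  simp only [smul_eq_mul, ← mul_sum, hsum, mul_one] at hjensen
  rw [negMulLog, log_inv] at hjensen
  rwa [neg_mul_neg, mul_le_mul_iff_of_pos_left (inv_pos.2 hcard)] at hjensen

section Entropy

variable {Ω α : Type*} [Fintype Ω]

theorem prb_nonneg (X : Ω → α) (a : α) : 0 ≤ prb X a := by
  unfold prb; positivity

theorem prb_eq_zero_of_notMem_range {X : Ω → α} {a : α} (ha : a ∉ Set.range X) :
    prb X a = 0 := by
  have : IsEmpty {ω // X ω = a} := ⟨fun ⟨ω, hω⟩ => ha ⟨ω, hω⟩⟩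
  simp [prb]

theorem sum_prb [Fintype α] [Nonempty Ω] (X : Ω → α) : ∑ a, prb X a = 1 := by
  classical
  have hfiber : ∑ a, (#{ω | X ω = a} : ℝ) = Fintype.card Ω := by
    exact_mod_cast (card_eq_sum_card_fiberwise (f := X) (s := univ) (t := univ)
      (fun _ _ => mem_univ _)).symm
  simp only [prb, Nat.card_eq_fintype_card, Fintype.card_subtype, ← sum_div, hfiber]
  exact div_self (by exact_mod_cast Fintype.card_ne_zero)

theorem entp_eq_sum_negMulLog_div (p : ℕ) [Fintype α] (X : Ω → α) :
    entp p X = (∑ a, negMulLog (prb X a)) / log p := by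
  simp only [entp, sum_div, negMulLog, logb]
  exact sum_congr rfl fun a _ => by ring

theorem entp_le_logb_card_image [Nonempty Ω] [Fintype α] [DecidableEq α] (p : ℕ)
    (X : Ω → α) :
    entp p X ≤ logb p #(univ.image X) := by
  have hvanish : ∀ a ∈ univ, a ∉ univ.image X → prb X a = 0 := fun a _ ha =>
    prb_eq_zero_of_notMem_range (by simpa using ha)
  have hsum : ∑ a ∈ univ.image X, prb X a = 1 := by
    rw [sum_subset (subset_univ _) hvanish, sum_prb]
  rw [entp_eq_sum_negMulLog_div, ← sum_subset (subset_univ _) (fun a ha h => by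
    rw [hvanish a ha h, negMulLog_zero])]
  exact div_le_div_of_nonneg_right
    (sum_negMulLog_le_log_card (univ_nonempty.image X) (fun a _ => prb_nonneg X a) hsum)
    (log_natCast_nonneg p)

theorem entp_le_logb_card_of_injOn [Nonempty Ω] [Fintype α] {β : Type*} [Fintype β] {p : ℕ}
    (hp : 1 < p) (X : Ω → α) {f : α → β} (hf : Set.InjOn f (Set.range X)) :
    entp p X ≤ logb p (Fintype.card β) := by
  classical
  refine (entp_le_logb_card_image p X).trans <| logb_le_logb_of_le (by exact_mod_cast hp)
    (by exact_mod_cast (univ_nonempty.image X).card_pos) ?_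
  exact_mod_cast card_le_card_of_injOn f (fun _ _ => mem_coe.2 (mem_univ _))
    (fun a ha b hb => hf (by simpa using ha) (by simpa using hb))

end Entropy

section Alignment

variable {V : Type*} {p L LZ : ℕ} [NeZero p] {Q U : SimpleGraph V}

theorem CDSSecure.exists_noise_of_adj {N : ℕ}
    {φ : V → (Fin L → ZMod p) → (Fin LZ → ZMod p) → (Fin N → ZMod p)}
    (hsec : CDSSecure U φ) {v u : V} (hvu : U.Adj v u) (s s' : Fin L → ZMod p)
    (z : Fin LZ → ZMod p) :
    ∃ z', φ v s' z' = φ v s z ∧ φ u s' z' = φ u s z := by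
  have hpos : 0 < Nat.card {z' // φ v s z' = φ v s z ∧ φ u s z' = φ u s z} :=
    Nat.card_pos_iff.2 ⟨⟨z, rfl, rfl⟩, inferInstance⟩
  rw [hsec v u hvu s s'] at hpos
  obtain ⟨⟨z', hz'⟩⟩ := (Nat.card_pos_iff.1 hpos).1
  exact ⟨z', hz'⟩

variable {φ : V → (Fin L → ZMod p) → (Fin LZ → ZMod p) → (Fin L → ZMod p)}
  (hnd : ∀ v : V, ∃ u : V, U.Adj v u) (hsec : CDSSecure U φ) (hcorr : CDSCorrect Q φ)
include hnd hsec hcorr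

theorem signal_eq_of_qualified_adj {v w : V} (hvw : Q.Adj v w) {s : Fin L → ZMod p}
    {z z' : Fin LZ → ZMod p} (hv : φ v s z = φ v s z') : φ w s z = φ w s z' := by
  obtain ⟨g, hg⟩ := hcorr v w hvw
  obtain ⟨u, hvu⟩ := hnd v
  have hsurj : Function.Surjective (g (φ v s z)) := fun s' => by
    obtain ⟨z'', hz'', -⟩ := hsec.exists_noise_of_adj hvu s s' z
    exact ⟨φ w s' z'', hz'' ▸ hg s' z''⟩
  apply Finite.injective_iff_surjective.2 hsurj
  rw [hg, hv, hg]

theorem signal_eq_of_qualified_reachable {v x : V} (hvx : Q.Reachable v x)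
    {s : Fin L → ZMod p} {z z' : Fin LZ → ZMod p} (hv : φ v s z = φ v s z') :
    φ x s z = φ x s z' := by
  obtain ⟨walk⟩ := hvx
  induction walk with
  | nil => exact hv
  | cons hadj _ ih => exact ih (signal_eq_of_qualified_adj hnd hsec hcorr hadj hv)

theorem signal_eq_of_unqualified_adj {v u : V} (hvu : U.Adj v u) (hreach : Q.Reachable v u)
    {s s' : Fin L → ZMod p} {z z' : Fin LZ → ZMod p} (hv : φ v s z = φ v s' z') :
    φ u s z = φ u s' z' := by
  obtain ⟨z'', hv'', hu''⟩ := hsec.exists_noise_of_adj hvu s s' z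
  rw [← hu'']
  exact signal_eq_of_qualified_reachable hnd hsec hcorr hreach (hv''.trans hv)

theorem signal_eq_of_unqualified_walk {v x : V} (walk : U.Walk v x)
    (hcomp : ∀ y ∈ walk.support, Q.connectedComponentMk y = Q.connectedComponentMk v)
    {s s' : Fin L → ZMod p} {z z' : Fin LZ → ZMod p} (hv : φ v s z = φ v s' z') :
    φ x s z = φ x s' z' := by
  induction walk with
  | nil => exact hv
  | @cons v u x hvu tail ih =>
    have hu : Q.connectedComponentMk u = Q.connectedComponentMk v :=
      hcomp u (by simp)
    refine ih (fun y hy => (hcomp y (by simp [hy])).trans hu.symm) ?_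
    exact signal_eq_of_unqualified_adj hnd hsec hcorr hvu
      (SimpleGraph.ConnectedComponent.eq.1 hu.symm) hv

end Alignment

theorem cds_signal_alignment_unqualified_path_general {V : Type*} (Q U : SimpleGraph V)
    (p L LZ : ℕ) (hp : p.Prime) [NeZero p]
    (hnd : ∀ v : V, ∃ u : V, U.Adj v u)
    (φ : V → (Fin L → ZMod p) → (Fin LZ → ZMod p) → (Fin L → ZMod p))
    (hcorr : CDSCorrect Q φ) (hsec : CDSSecure U φ)
    (v₁ vP : V) (w : U.Walk v₁ vP)
    (hsupp : ∀ x ∈ w.support, Q.connectedComponentMk x = Q.connectedComponentMk v₁) :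
    entp p (fun ω : (Fin L → ZMod p) × (Fin LZ → ZMod p) =>
        (φ v₁ ω.1 ω.2, φ vP ω.1 ω.2)) ≤ L := by
  have hfst : Set.InjOn Prod.fst (Set.range fun ω : (Fin L → ZMod p) × (Fin LZ → ZMod p) =>
      (φ v₁ ω.1 ω.2, φ vP ω.1 ω.2)) := by
    rintro _ ⟨ω, rfl⟩ _ ⟨ω', rfl⟩ h
    exact Prod.ext h (signal_eq_of_unqualified_walk hnd hsec hcorr w hsupp h)
  calc _ ≤ logb p (Fintype.card (Fin L → ZMod p)) :=
        entp_le_logb_card_of_injOn hp.one_lt _ hfst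
    _ = L := by
      rw [Fintype.card_fun, ZMod.card, Fintype.card_fin, Nat.cast_pow, logb_pow,
        logb_self_eq_one (by exact_mod_cast hp.one_lt), mul_one]

/-- Signal Alignment for Unqualified Path within Qualified Component: For a
non-degenerate CDS instance `(Q, U)` and a CDS scheme over `F_p` with `N = L` (rate `1/2`),
for every unqualified path `(v₁, v₂, …, v_P)` (a walk in `U` with distinct edges) all of
whose vertices lie in the same qualified component of `Q`, the two end signals satisfy
`H(v₁, v_P) ≤ L` in `p`-ary units, where the sample space is the secret–noise pair
`(S, Z)` uniform on `F_p^L × F_p^{L_Z}`. -/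
theorem cds_signal_alignment_unqualified_path {V : Type*} [Fintype V] (Q U : SimpleGraph V)
    (p L LZ : ℕ) (hp : p.Prime) [NeZero p]
    (hdisj : ∀ v u : V, ¬ (Q.Adj v u ∧ U.Adj v u))
    (hnd : ∀ v : V, ∃ u : V, U.Adj v u)
    (φ : V → (Fin L → ZMod p) → (Fin LZ → ZMod p) → (Fin L → ZMod p))
    (hcorr : CDSCorrect Q φ) (hsec : CDSSecure U φ)
    (v₁ vP : V) (w : U.Walk v₁ vP) (htrail : w.IsTrail)
    (hsupp : ∀ x ∈ w.support, Q.connectedComponentMk x = Q.connectedComponentMk v₁) :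
    entp p (fun ω : (Fin L → ZMod p) × (Fin LZ → ZMod p) =>
        (φ v₁ ω.1 ω.2, φ vP ω.1 ω.2)) ≤ L :=
  cds_signal_alignment_unqualified_path_general Q U p L LZ hp hnd φ hcorr hsec v₁ vP w hsupp
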